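/- Let σ be the logistic squasher, let K ∈ ℕ, γ_n* > 0, β_n > 0 with max{K, β_n, γ_n*} ≤ n^{c₆₀}, and define 𝔽 as the class of all functions f : ℝ^d → ℝ of the form f(x) = Σ_{k=1}^K a_k·σ(Σ_{j=1}^d b_{k,j}·x^{(j)} + b_{k,0}) for real coefficients a_k, b_{k,j} satisfying Σ_{k=1}^K a_k² ≤ γ_n*. Then for any x₁ⁿ ∈ (ℝ^d)ⁿ, log(𝒩₁(1/(n·β_n), 𝔽, x₁ⁿ)) ≤ c₆₁·(log n)·K. -/

import Mathlib

noncomputable section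

abbrev Evec (d : ℕ) := EuclideanSpace ℝ (Fin d)

/-- The logistic squasher. -/
def logistic (x : ℝ) : ℝ := 1 / (1 + Real.exp (-x))

/-- `IsL1Cover n z 𝓕 ε N` means that there exist `N` functions forming an
`ε`-`‖·‖₁`-cover of the class `𝓕` on the points `z₁,…,z_n`, i.e. for every `f ∈ 𝓕`
there is a `j` with `(1/n) Σ_i |f(z_i) − g_j(z_i)| < ε`. Hence the covering number
`𝒩₁(ε,𝓕,z₁ⁿ)` is the least `N` with `IsL1Cover n z 𝓕 ε N`. -/
def IsL1Cover {α : Type*} (n : ℕ) (z : Fin n → α) (𝓕 : Set (α → ℝ)) (ε : ℝ) (N : ℕ) : Prop :=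
  ∃ g : Fin N → α → ℝ, ∀ f ∈ 𝓕, ∃ j : Fin N, (∑ i, |f (z i) - g j (z i)|) / n < ε

/-- The class of shallow logistic networks with `K` neurons whose squared outer weights
sum to at most `γ`. -/
def logClass (d K : ℕ) (γ : ℝ) : Set (Evec d → ℝ) :=
  {f | ∃ (a : Fin K → ℝ) (b : Fin K → Evec d) (b0 : Fin K → ℝ),
    (∑ k, (a k) ^ 2 ≤ γ) ∧
    f = fun x => ∑ k, a k * logistic ((inner ℝ (b k) x : ℝ) + b0 k)}

/-! Round the outer weights (of modulus at most `r`) to the grid `ℤ / m`, and record for each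
hidden unit and each sample point on which side of the levels `logit (j / (m + 1))`, `j < m`, its
pre-activation lies. Units with the same record differ by less than `1 / (m + 1)` at every sample
point, so these data determine a network up to `K (r + 1) / m` on the sample. The records are sign
patterns of `n m` affine functions of `(b, b₀) ∈ ℝ^d × ℝ`, a family of VC dimension at most
`d + 2`, so by Sauer–Shelah at most `(n m + 1)^(d + 2)` of them occur. Taking `m` a power of `n`
makes the error smaller than `1 / (n βₙ)` with `n^(O(K))` networks. -/

open Finset Module

lemma logistic_pos (x : ℝ) : 0 < logistic x := by
  unfold logistic
  positivity

lemma logistic_lt_one (x : ℝ) : logistic x < 1 := by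
  unfold logistic
  rw [div_lt_one (by positivity)]
  linarith [Real.exp_pos (-x)]

lemma abs_logistic_le_one (x : ℝ) : |logistic x| ≤ 1 :=
  abs_le.2 ⟨by linarith [logistic_pos x], (logistic_lt_one x).le⟩

lemma logistic_strictMono : StrictMono logistic := fun a b hab => by
  unfold logistic
  gcongr

lemma logistic_log_div_one_sub {u : ℝ} (h0 : 0 < u) (h1 : u < 1) :
    logistic (Real.log (u / (1 - u))) = u := by
  have h2 : 0 < 1 - u := by linarith
  unfold logistic
  rw [← Real.log_inv, Real.exp_log (by positivity)]
  field_simp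
  ring

lemma le_logistic_iff {u t : ℝ} (h0 : 0 < u) (h1 : u < 1) :
    u ≤ logistic t ↔ Real.log (u / (1 - u)) ≤ t := by
  conv_lhs => rw [← logistic_log_div_one_sub h0 h1]
  exact logistic_strictMono.le_iff_le

lemma Int.floor_eq_floor_of_forall_le_iff {α : Type*} [Ring α] [LinearOrder α] [FloorRing α]
    {a b : α} (h : ∀ k : ℤ, (k : α) ≤ a ↔ (k : α) ≤ b) : ⌊a⌋ = ⌊b⌋ :=
  le_antisymm (Int.le_floor.2 ((h _).1 (Int.floor_le a)))
    (Int.le_floor.2 ((h _).2 (Int.floor_le b)))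

lemma abs_sub_lt_of_forall_grid_le_iff {u v : ℝ} {m : ℕ} (hu : u ∈ Set.Ioo 0 1)
    (hv : v ∈ Set.Ioo 0 1)
    (h : ∀ j : Fin m, ((j + 1 : ℝ) / (m + 1) ≤ u ↔ (j + 1 : ℝ) / (m + 1) ≤ v)) :
    |u - v| < 1 / (m + 1) := by
  have hM : (0 : ℝ) < m + 1 := by positivity
  have hk : ∀ k : ℤ, (k : ℝ) ≤ (m + 1) * u ↔ (k : ℝ) ≤ (m + 1) * v := by
    intro k
    rcases le_or_gt k 0 with hk0 | hk0
    · have : (k : ℝ) ≤ 0 := by exact_mod_cast hk0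
      constructor <;> intro <;> nlinarith [hu.1, hv.1]
    rcases le_or_gt (m + 1 : ℤ) k with hkm | hkm
    · have : (m + 1 : ℝ) ≤ k := by exact_mod_cast hkm
      constructor <;> intro <;> nlinarith [hu.2, hv.2]
    obtain ⟨j, rfl⟩ : ∃ j : ℕ, k = j + 1 := ⟨(k - 1).toNat, by omega⟩
    have hj := h ⟨j, by omega⟩
    rw [div_le_iff₀' hM, div_le_iff₀' hM] at hj
    exact_mod_cast hj
  have := Int.abs_sub_lt_one_of_floor_eq_floor (Int.floor_eq_floor_of_forall_le_iff hk)
  rw [← mul_sub, abs_mul, abs_of_pos hM] at this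
  rwa [lt_div_iff₀' hM]

theorem Finset.Shatters.card_le_finrank {ι W : Type*} [DecidableEq ι] [AddCommGroup W]
    [Module ℝ W] [FiniteDimensional ℝ W] (φ : ι → Dual ℝ W) {𝒜 : Finset (Finset ι)}
    (h𝒜 : ∀ A ∈ 𝒜, ∃ w, ∀ q, q ∈ A ↔ 0 ≤ φ q w) {B : Finset ι} (hB : 𝒜.Shatters B) :
    #B ≤ finrank ℝ W := by
  -- A dependence `∑ g q • φ q = 0` with `g q₀ < 0` is refuted by the sign pattern `{g > 0}`.
  have hnonneg : ∀ g : ι → ℝ, (∀ w, ∑ q ∈ B, g q * φ q w = 0) → ∀ q₀ ∈ B, 0 ≤ g q₀ := by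
    intro g hg q₀ hq₀
    by_contra! hneg
    obtain ⟨A, hA, hBA⟩ := hB (filter_subset (fun q => 0 < g q) B)
    obtain ⟨w, hw⟩ := h𝒜 A hA
    have hsign : ∀ q ∈ B, (0 ≤ φ q w ↔ 0 < g q) := fun q hq => by
      rw [← hw]
      simpa [hq] using congrArg (q ∈ ·) hBA
    have hpos : 0 < ∑ q ∈ B, g q * φ q w := by
      refine sum_pos' (fun q hq => ?_) ⟨q₀, hq₀, ?_⟩
      · rcases lt_or_ge 0 (g q) with hg | hg
        · exact mul_nonneg hg.le ((hsign q hq).2 hg)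
        · exact mul_nonneg_of_nonpos_of_nonpos hg
            (not_le.1 fun h => hg.not_gt ((hsign q hq).1 h)).le
      · exact mul_pos_of_neg_of_neg hneg
          (not_le.1 fun h => hneg.not_ge ((hsign q₀ hq₀).1 h).le)
    linarith [hg w]
  by_contra! hlt
  have hdep : ¬ LinearIndepOn ℝ φ (B : Set ι) := fun hli => by
    have := hli.fintype_card_le_finrank
    simp only [Subspace.dual_finrank_eq, Finset.coe_sort_coe, Fintype.card_coe] at this
    omega
  obtain ⟨g, hg, q, hq, hgq⟩ := not_linearIndepOn_finset_iff.1 hdep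
  have hgw : ∀ w, ∑ q ∈ B, g q * φ q w = 0 := fun w => by simpa using LinearMap.congr_fun hg w
  have hneg := hnonneg (-g) (fun w => by simp [hgw w]) q hq
  exact hgq (le_antisymm (by simpa using hneg) (hnonneg g hgw q hq))

theorem Finset.card_le_pow_of_vcDim_le {ι : Type*} [Fintype ι] [DecidableEq ι]
    {𝒜 : Finset (Finset ι)} {D : ℕ} (h : 𝒜.vcDim ≤ D) :
    #𝒜 ≤ (Fintype.card ι + 1) ^ D := by
  set N := Fintype.card ι
  calc #𝒜 ≤ #𝒜.shatterer := card_le_card_shatterer 𝒜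
    _ ≤ ∑ k ∈ Iic 𝒜.vcDim, N.choose k := card_shatterer_le_sum_vcDim
    _ ≤ ∑ k ∈ range (D + 1), N ^ k * 1 ^ (D - k) * D.choose k := by
        refine (sum_le_sum_of_subset_of_nonneg (fun k hk => ?_) fun _ _ _ => Nat.zero_le _).trans
          (sum_le_sum fun k hk => ?_)
        · simp only [mem_Iic, mem_range] at hk ⊢
          omega
        · rw [one_pow, mul_one]
          exact (Nat.choose_le_pow N k).trans
            (Nat.le_mul_of_pos_right _ (Nat.choose_pos (by simpa [Nat.lt_succ_iff] using hk)))
    _ = (N + 1) ^ D := (add_pow _ _ _).symm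

theorem exists_finset_signPattern_cover {Θ ι W : Type*} [Nonempty Θ] [Fintype ι]
    [AddCommGroup W] [Module ℝ W] [FiniteDimensional ℝ W] (φ : ι → Dual ℝ W) (e : Θ → W) :
    ∃ R : Finset Θ, #R ≤ (Fintype.card ι + 1) ^ finrank ℝ W ∧
      ∀ θ, ∃ θ' ∈ R, ∀ q, 0 ≤ φ q (e θ) ↔ 0 ≤ φ q (e θ') := by
  classical
  let S : Θ → Finset ι := fun θ => {q | 0 ≤ φ q (e θ)}
  let 𝒜 : Finset (Finset ι) := (Set.range S).toFinite.toFinset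
  have hvc : 𝒜.vcDim ≤ finrank ℝ W := Finset.sup_le fun B hB =>
    (mem_shatterer.1 hB).card_le_finrank φ fun A hA => by
      obtain ⟨θ, rfl⟩ := (Set.Finite.mem_toFinset _).1 hA
      exact ⟨e θ, fun q => by simp [S]⟩
  refine ⟨𝒜.image (Function.invFun S), card_image_le.trans (card_le_pow_of_vcDim_le hvc),
    fun θ => ⟨Function.invFun S (S θ), mem_image_of_mem _ (by simp [𝒜]), fun q => ?_⟩⟩
  have hS := congrArg (q ∈ ·) (Function.invFun_eq (⟨θ, rfl⟩ : ∃ θ', S θ' = S θ))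
  simpa [S] using hS.symm

def neuron {E : Type*} [NormedAddCommGroup E] [InnerProductSpace ℝ E] (p : E × ℝ) (x : E) : ℝ :=
  logistic (inner ℝ p.1 x + p.2)

theorem exists_neuron_cover {E : Type*} [NormedAddCommGroup E] [InnerProductSpace ℝ E]
    [FiniteDimensional ℝ E] {n : ℕ} (z : Fin n → E) (m : ℕ) :
    ∃ R : Finset (E × ℝ), #R ≤ (n * m + 1) ^ (finrank ℝ E + 2) ∧
      ∀ p, ∃ p' ∈ R, ∀ i, |neuron p (z i) - neuron p' (z i)| < 1 / (m + 1) := by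
  let u : Fin m → ℝ := fun j => (j + 1) / (m + 1)
  have hu : ∀ j, u j ∈ Set.Ioo 0 1 := fun j => by
    refine ⟨by positivity, (div_lt_one (by positivity)).2 ?_⟩
    exact_mod_cast Nat.succ_lt_succ j.2
  -- `neuron p (z i)` crosses the level `u j` exactly where the affine function
  -- `(p, 1) ↦ ⟪p.1, z i⟫ + p.2 - logit (u j)` changes sign.
  let φ : Fin n × Fin m → Dual ℝ (E × ℝ × ℝ) := fun q =>
    (innerₛₗ ℝ).flip (z q.1) ∘ₗ LinearMap.fst ℝ E (ℝ × ℝ)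
      + LinearMap.fst ℝ ℝ ℝ ∘ₗ LinearMap.snd ℝ E (ℝ × ℝ)
      - Real.log (u q.2 / (1 - u q.2)) • LinearMap.snd ℝ ℝ ℝ ∘ₗ LinearMap.snd ℝ E (ℝ × ℝ)
  have hφ : ∀ p q, 0 ≤ φ q (p.1, p.2, 1) ↔ u q.2 ≤ neuron p (z q.1) := fun p q => by
    rw [neuron, le_logistic_iff (hu q.2).1 (hu q.2).2]
    simp [φ]
  obtain ⟨R, hcard, hR⟩ := exists_finset_signPattern_cover φ fun p : E × ℝ => (p.1, p.2, 1)
  refine ⟨R, by simpa [finrank_prod] using hcard, fun p => ?_⟩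
  obtain ⟨p', hp', hpp'⟩ := hR p
  refine ⟨p', hp', fun i => abs_sub_lt_of_forall_grid_le_iff ⟨logistic_pos _, logistic_lt_one _⟩
    ⟨logistic_pos _, logistic_lt_one _⟩ fun j => ?_⟩
  simpa only [hφ] using hpp' (i, j)

theorem exists_finset_grid (r : ℕ) {m : ℕ} (hm : 0 < m) :
    ∃ A : Finset ℝ, #A ≤ 2 * r * m + 1 ∧ ∀ a : ℝ, |a| ≤ r → ∃ a' ∈ A, |a - a'| ≤ 1 / m := by
  have hm' : (0 : ℝ) < m := by exact_mod_cast hm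
  refine ⟨(Icc (-(r * m : ℤ)) (r * m)).image fun j : ℤ => (j : ℝ) / m, ?_, fun a ha => ?_⟩
  · refine card_image_le.trans ?_
    rw [Int.card_Icc, Int.toNat_le]
    push_cast
    linarith
  obtain ⟨ha₁, ha₂⟩ := abs_le.1 ha
  refine ⟨⌊a * m⌋ / m, mem_image_of_mem _ (mem_Icc.2 ⟨Int.le_floor.2 ?_, ?_⟩), ?_⟩
  · push_cast
    nlinarith
  · have : (⌊a * m⌋ : ℝ) ≤ r * m := (Int.floor_le _).trans (by nlinarith)
    exact_mod_cast this
  · have : a - ⌊a * m⌋ / m = Int.fract (a * m) / m := by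
      rw [Int.fract]
      field_simp
    rw [this, abs_div, abs_of_nonneg (Int.fract_nonneg _), abs_of_pos hm']
    gcongr
    exact (Int.fract_lt_one _).le

lemma abs_sum_mul_sub_sum_mul_le {ι : Type*} [Fintype ι] {a a' s s' : ι → ℝ} {r δ η : ℝ}
    (ha : ∀ k, |a k| ≤ r) (haa' : ∀ k, |a k - a' k| ≤ δ) (hss' : ∀ k, |s k - s' k| ≤ η)
    (hs' : ∀ k, |s' k| ≤ 1) :
    |∑ k, a k * s k - ∑ k, a' k * s' k| ≤ Fintype.card ι * (r * η + δ) := by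
  rw [← sum_sub_distrib]
  refine (abs_sum_le_sum_abs _ _).trans ?_
  rw [← nsmul_eq_mul]
  refine sum_le_card_nsmul _ _ _ fun k _ => ?_
  have hr : 0 ≤ r := (abs_nonneg _).trans (ha k)
  have hδ : 0 ≤ δ := (abs_nonneg _).trans (haa' k)
  calc |a k * s k - a' k * s' k| = |a k * (s k - s' k) + (a k - a' k) * s' k| := by ring_nf
    _ ≤ |a k| * |s k - s' k| + |a k - a' k| * |s' k| := by
        rw [← abs_mul, ← abs_mul]
        exact abs_add_le _ _
    _ ≤ r * η + δ * 1 := add_le_add (mul_le_mul (ha k) (hss' k) (abs_nonneg _) hr)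
        (mul_le_mul (haa' k) (hs' k) (abs_nonneg _) hδ)
    _ = r * η + δ := by rw [mul_one]

lemma isL1Cover_of_finset {α : Type*} {n N : ℕ} {z : Fin n → α} {𝓕 : Set (α → ℝ)} {ε : ℝ}
    (G : Finset (α → ℝ)) (hG : #G ≤ N) (hε : 0 < ε)
    (h : ∀ f ∈ 𝓕, ∃ g ∈ G, ∀ i, |f (z i) - g (z i)| < ε) : IsL1Cover n z 𝓕 ε N := by
  refine ⟨fun j => G.toList.getD j 0, fun f hf => ?_⟩
  obtain ⟨g, hg, hfg⟩ := h f hf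
  obtain ⟨j, hj, rfl⟩ := List.getElem_of_mem (mem_toList.2 hg)
  refine ⟨⟨j, hj.trans_le (by simpa using hG)⟩, ?_⟩
  simp only [List.getD_eq_getElem _ _ hj]
  rcases n.eq_zero_or_pos with rfl | hn
  · simpa using hε
  rw [div_lt_iff₀ (by exact_mod_cast hn)]
  calc ∑ i, |f (z i) - G.toList[j] (z i)| < ∑ _i : Fin n, ε :=
        sum_lt_sum_of_nonempty ⟨⟨0, hn⟩, mem_univ _⟩ fun i _ => hfg i
    _ = ε * n := by simp [mul_comm]

theorem isL1Cover_logClass {d K n N : ℕ} {γ r δ η ε : ℝ} (z : Fin n → Evec d) {A : Finset ℝ}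
    {R : Finset (Evec d × ℝ)} (hA : ∀ a, |a| ≤ r → ∃ a' ∈ A, |a - a'| ≤ δ)
    (hR : ∀ p, ∃ p' ∈ R, ∀ i, |neuron p (z i) - neuron p' (z i)| ≤ η)
    (hγ : γ ≤ r ^ 2) (hr : 0 ≤ r) (hε : 0 < ε) (hKε : K * (r * η + δ) < ε)
    (hN : #A ^ K * #R ^ K ≤ N) : IsL1Cover n z (logClass d K γ) ε N := by
  classical
  let net : (Fin K → ℝ) × (Fin K → Evec d × ℝ) → Evec d → ℝ :=
    fun ap x => ∑ k, ap.1 k * neuron (ap.2 k) x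
  refine isL1Cover_of_finset ((Fintype.piFinset fun _ => A) ×ˢ (Fintype.piFinset fun _ => R)
    |>.image net) (card_image_le.trans ?_) hε ?_
  · simpa [card_product, Fintype.card_piFinset] using hN
  rintro _ ⟨a, b, b₀, ha, rfl⟩
  have har : ∀ k, |a k| ≤ r := fun k => abs_le_of_sq_le_sq
    ((single_le_sum (fun k _ => sq_nonneg (a k)) (mem_univ k)).trans (ha.trans hγ)) hr
  choose a' ha'A ha' using fun k => hA (a k) (har k)
  choose p hpR hp using fun k => hR (b k, b₀ k)
  refine ⟨net (a', p), mem_image_of_mem _ (mem_product.2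
    ⟨Fintype.mem_piFinset.2 ha'A, Fintype.mem_piFinset.2 hpR⟩), fun i => ?_⟩
  refine lt_of_le_of_lt ?_ hKε
  change |∑ k, a k * neuron (b k, b₀ k) (z i) - ∑ k, a' k * neuron (p k) (z i)| ≤ _
  simpa [Fintype.card_fin] using
    abs_sum_mul_sub_sum_mul_le har ha' (fun k => hp k i) fun k => abs_logistic_le_one _

lemma add_one_le_pow_add_two {n x : ℕ} (hn : 2 ≤ n) (k : ℕ) (hx : x ≤ 2 * n ^ k) :
    x + 1 ≤ n ^ (k + 2) := by
  have h1 : 1 ≤ n ^ k := Nat.one_le_pow _ _ (by omega)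
  have h4 : 4 ≤ n ^ 2 := by nlinarith
  rw [pow_add]
  nlinarith

theorem isL1Cover_logClass_of_le_pow {d n K e : ℕ} {γ β : ℝ} (hn : 2 ≤ n) (hβ0 : 0 < β)
    (hK : K ≤ n ^ e) (hβ : β ≤ n ^ e) (hγ : γ ≤ n ^ e) (z : Fin n → Evec d) :
    IsL1Cover n z (logClass d K γ) (1 / (n * β)) (n ^ ((4 * e + 6) * (d + 3) * K)) := by
  set L := n ^ e
  set m := n ^ (3 * e + 3)
  have hL : 1 ≤ L := Nat.one_le_pow _ _ (by omega)
  have hm : 0 < m := Nat.pow_pos (by omega)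
  have hLm : L * (L + 1) * (n * L) < m := calc
    L * (L + 1) * (n * L) ≤ L * (n * L) * (n * L) := by gcongr; nlinarith
    _ = n ^ (3 * e + 2) := by simp only [L]; ring
    _ < m := Nat.pow_lt_pow_right (by omega) (by omega)
  obtain ⟨A, hAcard, hA⟩ := exists_finset_grid L hm
  obtain ⟨R, hRcard, hR⟩ := exists_neuron_cover z m
  have hmR : (0 : ℝ) < m := by exact_mod_cast hm
  have hLR : (1 : ℝ) ≤ L := by exact_mod_cast hL
  refine isL1Cover_logClass (r := L) (δ := 1 / m) (η := 1 / m) (R := R) z hA (fun p => ?_) ?_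
    (by positivity) (by positivity) ?_ ?_
  · obtain ⟨p', hp', hpp'⟩ := hR p
    refine ⟨p', hp', fun i => (hpp' i).le.trans ?_⟩
    gcongr
    linarith
  · have : γ ≤ L := by simpa [L] using hγ
    nlinarith
  · have hβL : β ≤ L := by simpa [L] using hβ
    calc (K : ℝ) * (L * (1 / m) + 1 / m) = K * (L + 1) / m := by ring
      _ ≤ L * (L + 1) / m := by gcongr
      _ < 1 / (n * L) := by
          rw [div_lt_div_iff₀ hmR (by positivity), one_mul]
          exact_mod_cast hLm
      _ ≤ 1 / (n * β) := by gcongr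
  · have hq : ∀ k ≤ 4 * e + 4, ∀ x ≤ 2 * n ^ k, x + 1 ≤ n ^ (4 * e + 6) := fun k hk x hx =>
      (add_one_le_pow_add_two hn k hx).trans (Nat.pow_le_pow_right (by omega) (by omega))
    have hA' : #A ≤ n ^ (4 * e + 6) :=
      hAcard.trans (hq (4 * e + 3) (by omega) _ (le_of_eq (by simp only [L, m]; ring)))
    have hR' : #R ≤ (n ^ (4 * e + 6)) ^ (d + 2) := by
      rw [finrank_euclideanSpace_fin] at hRcard
      refine hRcard.trans (Nat.pow_le_pow_left (hq (3 * e + 4) (by omega) _ ?_) _)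
      calc n * m = 1 * n ^ (3 * e + 4) := by simp only [m]; ring
        _ ≤ 2 * n ^ (3 * e + 4) := by gcongr; norm_num
    calc #A ^ K * #R ^ K ≤ (n ^ (4 * e + 6)) ^ K * ((n ^ (4 * e + 6)) ^ (d + 2)) ^ K := by
          gcongr
      _ = n ^ ((4 * e + 6) * (d + 3) * K) := by ring

lemma abs_apply_lt_one_of_mem_logClass {d K : ℕ} {γ : ℝ} (hK : K ≤ 1) (hγ : γ ≤ 1)
    {f : Evec d → ℝ} (hf : f ∈ logClass d K γ) (x : Evec d) : |f x| < 1 := by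
  obtain ⟨a, b, b₀, ha, rfl⟩ := hf
  interval_cases K
  · simp
  simp only [Fin.sum_univ_one] at ha ⊢
  have ha₁ : |a 0| ≤ 1 := (sq_le_one_iff_abs_le_one _).1 (ha.trans hγ)
  set t := inner ℝ (b 0) x + b₀ 0
  rw [abs_mul, abs_of_pos (logistic_pos t)]
  nlinarith [logistic_pos t, logistic_lt_one t, abs_nonneg (a 0)]

lemma isL1Cover_logClass_single_point {d K : ℕ} {γ β : ℝ} (hβ0 : 0 < β) (hK : K ≤ 1)
    (hβ : β ≤ 1) (hγ : γ ≤ 1) (z : Fin 1 → Evec d) :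
    IsL1Cover 1 z (logClass d K γ) (1 / (1 * β)) 1 := by
  refine isL1Cover_of_finset {0} (by simp) (by positivity) fun f hf =>
    ⟨0, mem_singleton_self _, fun i => ?_⟩
  rw [Pi.zero_apply, sub_zero]
  exact (abs_apply_lt_one_of_mem_logClass hK hγ hf _).trans_le
    (by rwa [one_mul, one_le_div hβ0])

/-- Lemma 14: covering number bound for shallow logistic networks,
phrased via: the log of the least cover size `𝒩₁(1/(nβ_n),𝓕,x₁ⁿ)` is at most
`c₆₁ (log n) K`, i.e. there is a cover of size `N` with `log N ≤ c₆₁ (log n) K`. -/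
theorem statement14 (d : ℕ) (c60 : ℝ) (hc60 : 0 < c60) :
    ∃ c61 : ℝ, 0 < c61 ∧
      ∀ (n K : ℕ) (γ βn : ℝ), 0 < γ → 0 < βn →
        max (max (K : ℝ) βn) γ ≤ (n : ℝ) ^ c60 →
        ∀ z : Fin n → Evec d,
          ∃ N : ℕ, 1 ≤ N ∧ IsL1Cover n z (logClass d K γ) (1 / (n * βn)) N ∧
            Real.log N ≤ c61 * Real.log n * K := by
  set e := ⌈c60⌉₊
  refine ⟨((4 * e + 6) * (d + 3) : ℕ), by positivity, fun n K γ βn _ hβn hmax z => ?_⟩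
  have hn : 1 ≤ n := Nat.pos_of_ne_zero fun hn => by
    simp only [hn, CharP.cast_eq_zero, Real.zero_rpow hc60.ne', max_le_iff] at hmax
    linarith
  have hpow : (n : ℝ) ^ c60 ≤ (n : ℝ) ^ e := by
    rw [← Real.rpow_natCast]
    exact Real.rpow_le_rpow_of_exponent_le (by exact_mod_cast hn) (Nat.le_ceil _)
  obtain ⟨⟨hK, hβ⟩, hγ⟩ : ((K : ℝ) ≤ n ^ e ∧ βn ≤ n ^ e) ∧ γ ≤ n ^ e := by
    simpa only [max_le_iff] using hmax.trans hpow
  refine ⟨n ^ ((4 * e + 6) * (d + 3) * K), Nat.one_le_pow _ _ hn, ?_, ?_⟩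
  · rcases hn.eq_or_lt with rfl | hn
    · simp only [Nat.cast_one, one_pow] at hK hβ hγ ⊢
      exact isL1Cover_logClass_single_point hβn (by exact_mod_cast hK) hβ hγ z
    · exact isL1Cover_logClass_of_le_pow hn hβn (by exact_mod_cast hK) hβ hγ z
  · rw [Nat.cast_pow, Real.log_pow]
    exact le_of_eq (by push_cast; ring)

end
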